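/- For every n ≥ 1, the number of explicit λυ-substitutions of size n equals the partial sum of Catalan numbers ∑_{j=0}^{n−1} C_j; equivalently, the ordinary generating function S(z) of λυ-substitutions counted by size satisfies S(z) = ((1 − √(1 − 4z))/(2z))·(z/(1 − z)). -/

import Mathlib

mutual
/-- λυ-terms in de Bruijn notation, with explicit closures. -/
inductive LTerm : Type
  | idx : Nat → LTerm
  | lam : LTerm → LTerm
  | app : LTerm → LTerm → LTerm
  | clos : LTerm → LSub → LTerm
  deriving DecidableEq

/-- explicit λυ-substitutions. -/
inductive LSub : Type
  | slash : LTerm → LSub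
  | lift : LSub → LSub
  | shift : LSub
  deriving DecidableEq
end

mutual
/-- natural size of a λυ-term: the number of constructors (|idx n| = n+1). -/
def LTerm.size : LTerm → Nat
  | .idx n => n + 1
  | .lam a => 1 + a.size
  | .app a b => 1 + a.size + b.size
  | .clos a s => 1 + a.size + s.size

/-- natural size of a substitution. -/
def LSub.size : LSub → Nat
  | .slash a => 1 + a.size
  | .lift s => 1 + s.size
  | .shift => 1
end

/-- a λυ-term is pure if it contains no closure; pure terms are exactly the ψ-normal forms. -/
def LTerm.IsPure : LTerm → Prop
  | .idx _ => True
  | .lam a => a.IsPure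
  | .app a b => a.IsPure ∧ b.IsPure
  | .clos _ _ => False

/-- one normal-order (leftmost-outermost) ψ-reduction step. -/
inductive NStep : LTerm → LTerm → Prop
  /-- (App) (ab)[s] → a[s](b[s]) -/
  | appS (a b : LTerm) (s : LSub) :
      NStep (.clos (.app a b) s) (.app (.clos a s) (.clos b s))
  /-- (Lambda) (λa)[s] → λ(a[⇑(s)]) -/
  | lamS (a : LTerm) (s : LSub) :
      NStep (.clos (.lam a) s) (.lam (.clos a (.lift s)))
  /-- (FVar) 0[a/] → a -/
  | fvar (a : LTerm) : NStep (.clos (.idx 0) (.slash a)) a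
  /-- (RVar) (S n)[a/] → n -/
  | rvar (n : Nat) (a : LTerm) : NStep (.clos (.idx (n+1)) (.slash a)) (.idx n)
  /-- (FVarLift) 0[⇑(s)] → 0 -/
  | fvarLift (s : LSub) : NStep (.clos (.idx 0) (.lift s)) (.idx 0)
  /-- (RVarLift) (S n)[⇑(s)] → n[s][↑] -/
  | rvarLift (n : Nat) (s : LSub) :
      NStep (.clos (.idx (n+1)) (.lift s)) (.clos (.clos (.idx n) s) .shift)
  /-- (VarShift) n[↑] → S n -/
  | varShift (n : Nat) : NStep (.clos (.idx n) .shift) (.idx (n+1))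
  /-- reduce under an abstraction -/
  | lamCong {a a' : LTerm} : NStep a a' → NStep (.lam a) (.lam a')
  /-- reduce in the left part of an application -/
  | appLeft {a a' : LTerm} (b : LTerm) : NStep a a' → NStep (.app a b) (.app a' b)
  /-- reduce in the right part of an application, provided the left part is normal -/
  | appRight {b b' : LTerm} (a : LTerm) :
      a.IsPure → NStep b b' → NStep (.app a b) (.app a b')
  /-- reduce in the body of a closure, provided the closure is not itself a ψ-redex,
      i.e. its body is again a closure -/
  | closCong {t t' : LTerm} (s : LSub) :
      (∃ u v, t = LTerm.clos u v) → NStep t t' → NStep (.clos t s) (.clos t' s)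

/-- `NormIn t k` : `t` reaches its ψ-normal form in exactly `k` normal-order
ψ-reduction steps (written t ↓_k). -/
inductive NormIn : LTerm → Nat → Prop
  | base {t : LTerm} : t.IsPure → NormIn t 0
  | step {t t' : LTerm} {k : Nat} : NStep t t' → NormIn t' k → NormIn t (k+1)


/-!
Write `t n` and `s n` for the numbers of λυ-terms and λυ-substitutions of size `n`. Reading the
grammar off constructor by constructor gives
`s (n+1) = t n + s n + [n = 0]` and
`t (n+1) = 1 + t n + ∑_{i+j=n} t i t j + ∑_{i+j=n} t i s j`.
Subtracting two consecutive instances of the second recurrence eliminates `s` and leaves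
`t (n+2) = 2 t (n+1) + ∑_{i+j=n+1} t i t j`, i.e. `1 + T = 1 + z (1 + T)²` for the generating
function `T` of terms. So `t n + [n = 0]` is the `n`-th Catalan number, and the first recurrence
makes `s n` the sum of the first `n` of them.
-/

open Finset

theorem LTerm.size_pos (t : LTerm) : 0 < t.size := by
  cases t <;> simp only [LTerm.size] <;> omega

theorem LSub.size_pos (s : LSub) : 0 < s.size := by
  cases s <;> simp only [LSub.size] <;> omega

mutual
def termsOfSize : ℕ → Finset LTerm
  | 0 => ∅
  | n + 1 => {.idx n} ∪ (termsOfSize n).image .lam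
      ∪ univ.biUnion (fun i : Fin (n + 1) =>
          (termsOfSize i ×ˢ termsOfSize (n - i)).image fun p => .app p.1 p.2)
      ∪ univ.biUnion (fun i : Fin (n + 1) =>
          (termsOfSize i ×ˢ subsOfSize (n - i)).image fun p => .clos p.1 p.2)

def subsOfSize : ℕ → Finset LSub
  | 0 => ∅
  | n + 1 => (termsOfSize n).image .slash ∪ (subsOfSize n).image .lift
      ∪ if n = 0 then {.shift} else ∅
end

theorem exists_fin_eq_and_eq_sub_iff {x y n : ℕ} :
    (∃ i : Fin (n + 1), x = i ∧ y = n - i) ↔ x + y = n :=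
  ⟨fun ⟨i, hx, hy⟩ => by omega, fun h => ⟨⟨x, by omega⟩, rfl, (by omega : y = n - x)⟩⟩

mutual
theorem mem_termsOfSize : ∀ (t : LTerm) (n : ℕ), t ∈ termsOfSize n ↔ t.size = n
  | t, 0 => by simpa [termsOfSize] using t.size_pos.ne'
  | .idx k, n + 1 => by simp [termsOfSize, LTerm.size]
  | .lam a, n + 1 => by simp [termsOfSize, LTerm.size, add_comm 1, mem_termsOfSize a]
  | .app a b, n + 1 => by
    simp [termsOfSize, LTerm.size, add_comm 1, add_right_comm _ 1, mem_termsOfSize a,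
      mem_termsOfSize b, exists_fin_eq_and_eq_sub_iff]
  | .clos a s, n + 1 => by
    simp [termsOfSize, LTerm.size, add_comm 1, add_right_comm _ 1, mem_termsOfSize a,
      mem_subsOfSize s, exists_fin_eq_and_eq_sub_iff]

theorem mem_subsOfSize : ∀ (s : LSub) (n : ℕ), s ∈ subsOfSize n ↔ s.size = n
  | s, 0 => by simpa [subsOfSize] using s.size_pos.ne'
  | .slash a, n + 1 => by simp [subsOfSize, LSub.size, add_comm 1, mem_ite, mem_termsOfSize a]
  | .lift s, n + 1 => by simp [subsOfSize, LSub.size, add_comm 1, mem_ite, mem_subsOfSize s]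
  | .shift, n + 1 => by simp [subsOfSize, LSub.size, mem_ite]
end

theorem disjoint_termsOfSize {i j : ℕ} (hij : i ≠ j) :
    Disjoint (termsOfSize i) (termsOfSize j) :=
  disjoint_left.mpr fun t hi hj =>
    hij (((mem_termsOfSize t i).mp hi).symm.trans ((mem_termsOfSize t j).mp hj))

theorem card_biUnion_image_product {ι α β γ : Type*} [DecidableEq γ]
    (s : Finset ι) (A : ι → Finset α) (B : ι → Finset β) (f : α → β → γ)
    (hf : Function.Injective2 f) (hA : (s : Set ι).PairwiseDisjoint A) :
    #(s.biUnion fun i => (A i ×ˢ B i).image fun p => f p.1 p.2) = ∑ i ∈ s, #(A i) * #(B i) := by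
  rw [card_biUnion]
  · exact sum_congr rfl fun i _ =>
      (card_image_of_injective _ hf.uncurry).trans (card_product _ _)
  · intro i hi j hj hij
    simp only [Function.onFun, disjoint_left, mem_image, mem_product, not_exists, not_and]
    rintro _ ⟨⟨a, b⟩, ⟨ha, -⟩, rfl⟩ ⟨a', b'⟩ ⟨ha', -⟩ h
    obtain ⟨rfl, -⟩ := hf h
    exact disjoint_left.mp (hA hi hj hij) ha ha'

theorem sum_fin_eq_sum_antidiagonal {M : Type*} [AddCommMonoid M] (n : ℕ) (f : ℕ → ℕ → M) :
    ∑ i : Fin (n + 1), f i (n - i) = ∑ p ∈ antidiagonal n, f p.1 p.2 := by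
  rw [Nat.sum_antidiagonal_eq_sum_range_succ, sum_range]

structure LUCountRecurrence (t s : ℕ → ℕ) : Prop where
  terms_zero : t 0 = 0
  subs_zero : s 0 = 0
  subs_succ (n : ℕ) : s (n + 1) = t n + s n + if n = 0 then 1 else 0
  terms_succ (n : ℕ) : t (n + 1) = 1 + t n + ∑ p ∈ antidiagonal n, t p.1 * t p.2
    + ∑ p ∈ antidiagonal n, t p.1 * s p.2

theorem luCountRecurrence_card :
    LUCountRecurrence (fun n => #(termsOfSize n)) (fun n => #(subsOfSize n)) where
  terms_zero := by simp [termsOfSize]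
  subs_zero := by simp [subsOfSize]
  subs_succ n := by
    rw [subsOfSize, card_union_of_disjoint, card_union_of_disjoint,
      card_image_of_injective _ fun _ _ h => LSub.slash.inj h,
      card_image_of_injective _ fun _ _ h => LSub.lift.inj h, apply_ite card, card_singleton,
      card_empty]
    all_goals simp only [disjoint_left, mem_union, mem_image]; aesop
  terms_succ n := by
    rw [termsOfSize, card_union_of_disjoint, card_union_of_disjoint, card_union_of_disjoint,
      card_singleton, card_image_of_injective _ fun _ _ h => LTerm.lam.inj h,
      card_biUnion_image_product _ _ _ _ (fun _ _ _ _ h => LTerm.app.inj h),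
      card_biUnion_image_product _ _ _ _ (fun _ _ _ _ h => LTerm.clos.inj h),
      sum_fin_eq_sum_antidiagonal n (fun i j => #(termsOfSize i) * #(termsOfSize j)),
      sum_fin_eq_sum_antidiagonal n (fun i j => #(termsOfSize i) * #(subsOfSize j))]
    all_goals first
      | exact fun i _ j _ hij => disjoint_termsOfSize (Fin.val_injective.ne hij)
      | simp only [disjoint_left, mem_union, mem_image, mem_biUnion]; aesop

theorem eq_catalan_of_recurrence (c : ℕ → ℕ) (h0 : c 0 = 1)
    (h : ∀ n, c (n + 1) = ∑ p ∈ antidiagonal n, c p.1 * c p.2) (n : ℕ) : c n = catalan n := by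
  induction n using Nat.strong_induction_on with
  | _ n ih =>
    rcases n with _ | n
    · rw [h0, catalan_zero]
    · rw [h, catalan_succ']
      refine sum_congr rfl fun p hp => ?_
      rw [HasAntidiagonal.mem_antidiagonal] at hp
      rw [ih p.1 (by omega), ih p.2 (by omega)]

section Antidiagonal

variable {R : Type*} [NonAssocSemiring R]

theorem sum_antidiagonal_mul_ite_snd_eq_zero (f : ℕ → R) (n : ℕ) :
    ∑ p ∈ antidiagonal n, f p.1 * (if p.2 = 0 then 1 else 0) = f n := by
  rw [sum_eq_single (n, 0)]
  · simp
  · rintro ⟨i, j⟩ hp hne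
    have hj : j ≠ 0 := by
      rintro rfl
      simp_all
    simp [hj]
  · simp

theorem sum_antidiagonal_ite_fst_eq_zero_mul (f : ℕ → R) (n : ℕ) :
    ∑ p ∈ antidiagonal n, (if p.1 = 0 then 1 else 0) * f p.2 = f n := by
  rw [sum_eq_single (0, n)]
  · simp
  · rintro ⟨i, j⟩ hp hne
    have hi : i ≠ 0 := by
      rintro rfl
      simp_all
    simp [hi]
  · simp

end Antidiagonal

theorem sum_antidiagonal_add_ite_mul_add_ite {R : Type*} [CommSemiring R] (f : ℕ → R) (n : ℕ) :
    ∑ p ∈ antidiagonal n, (f p.1 + if p.1 = 0 then 1 else 0) * (f p.2 + if p.2 = 0 then 1 else 0)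
      = ∑ p ∈ antidiagonal n, f p.1 * f p.2 + 2 * f n + if n = 0 then 1 else 0 := by
  simp only [add_mul, mul_add, sum_add_distrib,
    sum_antidiagonal_mul_ite_snd_eq_zero (fun i => if i = 0 then (1 : R) else 0),
    sum_antidiagonal_mul_ite_snd_eq_zero, sum_antidiagonal_ite_fst_eq_zero_mul]
  ring

namespace LUCountRecurrence

variable {t s : ℕ → ℕ}

theorem terms_add_two (h : LUCountRecurrence t s) (n : ℕ) :
    t (n + 2) = 2 * t (n + 1) + ∑ p ∈ antidiagonal (n + 1), t p.1 * t p.2 := by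
  have hts : ∑ p ∈ antidiagonal (n + 1), t p.1 * s p.2
      = ∑ p ∈ antidiagonal n, t p.1 * t p.2 + ∑ p ∈ antidiagonal n, t p.1 * s p.2 + t n := by
    rw [Nat.sum_antidiagonal_succ', h.subs_zero, mul_zero, zero_add]
    simp only [h.subs_succ, mul_add, sum_add_distrib, sum_antidiagonal_mul_ite_snd_eq_zero]
  have h₁ := h.terms_succ n
  have h₂ : t (n + 2) = _ := h.terms_succ (n + 1)
  rw [hts] at h₂
  omega

theorem terms_add_ite_eq_catalan (h : LUCountRecurrence t s) (n : ℕ) :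
    (t n + if n = 0 then 1 else 0) = catalan n := by
  refine eq_catalan_of_recurrence (fun n => t n + if n = 0 then 1 else 0)
    (by simp [h.terms_zero]) (fun n => ?_) n
  rw [sum_antidiagonal_add_ite_mul_add_ite]
  rcases n with _ | n
  · simp [h.terms_succ 0, h.terms_zero, h.subs_zero]
  · rw [if_neg (by omega), if_neg (by omega), h.terms_add_two]
    ring

theorem subs_eq_sum_range_catalan (h : LUCountRecurrence t s) (n : ℕ) :
    s n = ∑ j ∈ range n, catalan j := by
  induction n with
  | zero => rw [h.subs_zero, sum_range_zero]
  | succ n ih =>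
    rw [h.subs_succ, sum_range_succ, ← ih, ← h.terms_add_ite_eq_catalan n]
    ring

end LUCountRecurrence

/-- For every n ≥ 1, the number of explicit λυ-substitutions of size n equals
the partial sum of Catalan numbers ∑_{j=0}^{n−1} C_j; equivalently, the
ordinary generating function of λυ-substitutions by size is
S(z) = ((1 − √(1−4z))/(2z))·(z/(1−z)). -/
theorem card_luSubs_eq_catalan_partial_sum (n : Nat) (hn : 1 ≤ n) :
    Nat.card {s : LSub // s.size = n} = ∑ j ∈ Finset.range n, catalan j := by
  have hcard : Nat.card {s : LSub // s.size = n} = #(subsOfSize n) := by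
    rw [← Nat.card_eq_finsetCard]
    exact Nat.card_congr (Equiv.subtypeEquivRight fun s => (mem_subsOfSize s n).symm)
  rw [hcard]
  exact luCountRecurrence_card.subs_eq_sum_range_catalan n
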